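/- arXiv:2312.01222 — 6 statements merged into one kernel-verified Lean document; each statement's English description precedes it below -/
import Mathlib

section
/- For system (A), the straight line c − f − (c − f)·x + 2·y = 0 is an invariant algebraic curve if and only if e = (2 + c)·(c − f)/2; moreover, when e = (2 + c)·(c − f)/2 the polynomial identity p·∂f₂/∂x + q·∂f₂/∂y = K₂·f₂ holds with f₂(x,y) = c − f − (c − f)·x + 2·y and cofactor K₂(x,y) = 2x. -/
open MvPolynomial

/-- Right-hand side p of system (A). -/
noncomputable def pA (c : ℝ) : MvPolynomial (Fin 2) ℝ :=
  C c * X 0 + X 1 - C c * X 0 ^ 2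

/-- Right-hand side q of system (A). -/
noncomputable def qA (c e f : ℝ) : MvPolynomial (Fin 2) ℝ :=
  C e * X 0 + C (-1 + (e + f) / c) * X 1 - C e * X 0 ^ 2 + C 2 * X 0 * X 1

/-- The line `c - f - (c - f)x + 2y = 0`. -/
noncomputable def f2A (c f : ℝ) : MvPolynomial (Fin 2) ℝ :=
  C (c - f) - C (c - f) * X 0 + C 2 * X 1

/-! The derivative of `f₂` along system (A) is `2x·f₂ + δ·(x - x² + y/c)` with
`δ = 2e - (2 + c)(c - f)`. On the line `y = (c - f)(x - 1)/2` the polynomial `x - x² + y/c`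
takes values summing to `-2` at `x = 0` and `x = 2`, so `f₂` can divide the remainder only
when `δ = 0`. -/

theorem pderiv_zero_f2A (c f : ℝ) : pderiv 0 (f2A c f) = -C (c - f) := by
  simp [f2A, pderiv_X]

theorem pderiv_one_f2A (c f : ℝ) : pderiv 1 (f2A c f) = C 2 := by
  simp [f2A, pderiv_X]

theorem lieDeriv_f2A (c e f : ℝ) (hc : c ≠ 0) :
    pA c * pderiv 0 (f2A c f) + qA c e f * pderiv 1 (f2A c f)
      = C 2 * X 0 * f2A c f
        + C (2 * e - (2 + c) * (c - f)) * (X 0 - X 0 ^ 2 + C c⁻¹ * X 1) := by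
  rw [pderiv_zero_f2A, pderiv_one_f2A]
  apply MvPolynomial.funext
  intro x
  simp only [pA, qA, f2A, map_add, map_sub, map_mul, map_neg, map_pow, eval_C, eval_X]
  field_simp
  ring

theorem eq_zero_of_f2A_dvd (c f a : ℝ)
    (h : f2A c f ∣ C a * (X 0 - X 0 ^ 2 + C c⁻¹ * X 1)) : a = 0 := by
  have vanishes_on_line (x : Fin 2 → ℝ) (hx : eval x (f2A c f) = 0) :
      a * (x 0 - x 0 ^ 2 + c⁻¹ * x 1) = 0 := by
    simpa [hx] using map_dvd (eval x) h
  have h0 := vanishes_on_line ![0, -(c - f) / 2] (by simp [f2A]; ring)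
  have h2 := vanishes_on_line ![2, (c - f) / 2] (by simp [f2A]; ring)
  simp only [Matrix.cons_val_zero, Matrix.cons_val_one] at h0 h2
  linear_combination (h0 + h2) / (-2)

/-- For system (A), the straight line `c - f - (c - f)x + 2y = 0` is an invariant
algebraic curve if and only if `e = (2 + c)(c - f)/2`; moreover in that case the
identity holds with cofactor `K₂ = 2x`. -/
theorem invariant_line_f2_sysA (c e f : ℝ) (hc : c ≠ 0) :
    ((∃ K : MvPolynomial (Fin 2) ℝ,
        pA c * pderiv 0 (f2A c f) + qA c e f * pderiv 1 (f2A c f)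
          = K * f2A c f) ↔ e = (2 + c) * (c - f) / 2) ∧
    (e = (2 + c) * (c - f) / 2 →
      pA c * pderiv 0 (f2A c f) + qA c e f * pderiv 1 (f2A c f)
        = (C 2 * X 0) * f2A c f) := by
  have hL := lieDeriv_f2A c e f hc
  have cofactor (he : e = (2 + c) * (c - f) / 2) :
      pA c * pderiv 0 (f2A c f) + qA c e f * pderiv 1 (f2A c f)
        = (C 2 * X 0) * f2A c f := by
    rw [hL, show 2 * e - (2 + c) * (c - f) = 0 by rw [he]; ring, C_0, zero_mul, add_zero]
  refine ⟨⟨fun ⟨K, hK⟩ => ?_, fun he => ⟨_, cofactor he⟩⟩, cofactor⟩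
  have hdvd : f2A c f ∣ C (2 * e - (2 + c) * (c - f)) * (X 0 - X 0 ^ 2 + C c⁻¹ * X 1) :=
    (dvd_add_right (dvd_mul_left _ _)).mp (hL ▸ hK ▸ dvd_mul_left _ _)
  linarith [eq_zero_of_f2A_dvd c f _ hdvd]
end

section
/- For system (A), the straight line (c + f)·x + 2·y = 0 is an invariant algebraic curve if and only if e = −(2 + c)·(c + f)/2; moreover, when e = −(2 + c)·(c + f)/2 the polynomial identity p·∂f₃/∂x + q·∂f₃/∂y = K₃·f₃ holds with f₃(x,y) = (c + f)·x + 2·y and cofactor K₃(x,y) = 2·(x − 1). -/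
open MvPolynomial

/-- The line `(c + f)x + 2y = 0`. -/
noncomputable def f3A (c f : ℝ) : MvPolynomial (Fin 2) ℝ :=
  C (c + f) * X 0 + C 2 * X 1

/-!
Along the line, parametrised as `(t, -(c + f) t / 2)`, the derivative of `f₃` along system (A)
restricts to `a t + b t²` with `b = -(c (c + f) + 2 e + 2 (c + f))`. If the line is invariant this
restriction vanishes identically, and evaluating at `t = 1, 2` forces `b = 0`, which is the stated
condition on `e`. Conversely, under that condition `(e + f) / c = -(2 + c + f) / 2`, after which
the cofactor identity is a polynomial identity in `x, y, c, f`.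
-/

@[simp]
lemma pderiv_zero_f3A (c f : ℝ) : pderiv 0 (f3A c f) = C (c + f) := by
  simp [f3A]

@[simp]
lemma pderiv_one_f3A (c f : ℝ) : pderiv 1 (f3A c f) = C 2 := by
  simp [f3A]

lemma eval_f3A_on_line (c f t : ℝ) : eval ![t, -(c + f) * t / 2] (f3A c f) = 0 := by
  simp only [f3A, map_add, map_mul, eval_C, eval_X, Matrix.cons_val_zero, Matrix.cons_val_one,
    Matrix.cons_val_fin_one]
  ring

lemma eval_derivative_f3A_on_line (c e f t : ℝ) :
    eval ![t, -(c + f) * t / 2] (pA c * pderiv 0 (f3A c f) + qA c e f * pderiv 1 (f3A c f))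
      = ((c + f) * (c - (c + f) / 2) + 2 * e - (-1 + (e + f) / c) * (c + f)) * t
        - (c * (c + f) + 2 * e + 2 * (c + f)) * t ^ 2 := by
  simp only [pderiv_zero_f3A, pderiv_one_f3A, pA, qA, map_add, map_sub, map_mul, map_pow, eval_C,
    eval_X, Matrix.cons_val_zero, Matrix.cons_val_one, Matrix.cons_val_fin_one]
  ring

lemma eq_of_invariant_f3A (c e f : ℝ)
    (h : ∃ K, pA c * pderiv 0 (f3A c f) + qA c e f * pderiv 1 (f3A c f) = K * f3A c f) :
    e = -(2 + c) * (c + f) / 2 := by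
  obtain ⟨K, hK⟩ := h
  have on_line (t : ℝ) : eval ![t, -(c + f) * t / 2]
      (pA c * pderiv 0 (f3A c f) + qA c e f * pderiv 1 (f3A c f)) = 0 := by
    rw [hK, map_mul, eval_f3A_on_line, mul_zero]
  have at_one := on_line 1
  have at_two := on_line 2
  rw [eval_derivative_f3A_on_line] at at_one at_two
  linear_combination (2 * at_one - at_two) / 4

lemma derivative_f3A_eq_cofactor_mul (c e f : ℝ) (hc : c ≠ 0) (he : e = -(2 + c) * (c + f) / 2) :
    pA c * pderiv 0 (f3A c f) + qA c e f * pderiv 1 (f3A c f)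
      = (C 2 * (X 0 - 1)) * f3A c f := by
  have hq : -1 + (e + f) / c = -(4 + c + f) / 2 := by
    rw [he]
    field_simp
    ring
  rw [pderiv_zero_f3A, pderiv_one_f3A]
  apply MvPolynomial.funext
  intro v
  simp only [pA, qA, f3A, hq, map_add, map_sub, map_mul, map_pow, eval_C, eval_X, map_one]
  rw [he]
  ring

/-- For system (A), the straight line `(c + f)x + 2y = 0` is an invariant algebraic
curve if and only if `e = -(2 + c)(c + f)/2`; moreover in that case the identity
holds with cofactor `K₃ = 2(x - 1)`. -/
theorem invariant_line_f3_sysA (c e f : ℝ) (hc : c ≠ 0) :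
    ((∃ K : MvPolynomial (Fin 2) ℝ,
        pA c * pderiv 0 (f3A c f) + qA c e f * pderiv 1 (f3A c f)
          = K * f3A c f) ↔ e = -(2 + c) * (c + f) / 2) ∧
    (e = -(2 + c) * (c + f) / 2 →
      pA c * pderiv 0 (f3A c f) + qA c e f * pderiv 1 (f3A c f)
        = (C 2 * (X 0 - 1)) * f3A c f) :=
  ⟨⟨eq_of_invariant_f3A c e f, fun he => ⟨_, derivative_f3A_eq_cofactor_mul c e f hc he⟩⟩,
    derivative_f3A_eq_cofactor_mul c e f hc⟩
end

section
/- For system (A), the parabola g₃(x,y) = (1 + c)·x − (1 + c)·x² + y = 0 is an invariant algebraic curve if and only if e = −f·(1 + c); moreover, when e = −f·(1 + c) the polynomial identity p·∂g₃/∂x + q·∂g₃/∂y = H₃·g₃ holds with cofactor H₃(x,y) = c − f − 2c·x. -/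
open MvPolynomial

/-- The parabola `g₃ = (1 + c)x - (1 + c)x² + y`. -/
noncomputable def g3A (c : ℝ) : MvPolynomial (Fin 2) ℝ :=
  C (1 + c) * X 0 - C (1 + c) * X 0 ^ 2 + X 1

noncomputable def flowDerivA (c e f : ℝ) (g : MvPolynomial (Fin 2) ℝ) : MvPolynomial (Fin 2) ℝ :=
  pA c * pderiv 0 g + qA c e f * pderiv 1 g

lemma pderiv_zero_g3A (c : ℝ) : pderiv 0 (g3A c) = C (1 + c) - C (2 * (1 + c)) * X 0 := by
  simp [g3A, pderiv_X, C_mul, map_ofNat]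
  ring

lemma pderiv_one_g3A (c : ℝ) : pderiv 1 (g3A c) = 1 := by
  simp [g3A, pderiv_X]

lemma eval_g3A_two (c : ℝ) : eval ![2, 2 + 2 * c] (g3A c) = 0 := by
  simp [g3A]
  ring

lemma eval_flowDerivA_g3A_two (c e f : ℝ) (hc : c ≠ 0) :
    eval ![2, 2 + 2 * c] (flowDerivA c e f (g3A c)) = 2 * (e + f * (1 + c)) / c := by
  simp [flowDerivA, pderiv_zero_g3A, pderiv_one_g3A, pA, qA]
  field_simp
  ring

lemma flowDerivA_g3A (c f : ℝ) (hc : c ≠ 0) :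
    flowDerivA c (-f * (1 + c)) f (g3A c) = (C (c - f) - C (2 * c) * X 0) * g3A c := by
  have hcoeff : -1 + (-f * (1 + c) + f) / c = -1 - f := by
    field_simp
    ring
  rw [flowDerivA, pderiv_zero_g3A, pderiv_one_g3A, pA, qA, g3A, hcoeff]
  simp only [map_add, map_sub, map_mul, map_neg, map_one, map_ofNat]
  ring

/-- For system (A), the parabola `g₃ = 0` is an invariant algebraic curve if and only
if `e = -f(1 + c)`; moreover in that case the identity holds with cofactor
`H₃ = c - f - 2c·x`. -/
theorem invariant_parabola_g3_sysA (c e f : ℝ) (hc : c ≠ 0) :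
    ((∃ K : MvPolynomial (Fin 2) ℝ,
        pA c * pderiv 0 (g3A c) + qA c e f * pderiv 1 (g3A c)
          = K * g3A c) ↔ e = -f * (1 + c)) ∧
    (e = -f * (1 + c) →
      pA c * pderiv 0 (g3A c) + qA c e f * pderiv 1 (g3A c)
        = (C (c - f) - C (2 * c) * X 0) * g3A c) := by
  refine ⟨⟨fun ⟨K, hK⟩ => ?_, fun he => ⟨_, he ▸ flowDerivA_g3A c f hc⟩⟩,
    fun he => he ▸ flowDerivA_g3A c f hc⟩
  -- the flow derivative vanishes on the curve, in particular at its point `(2, 2 + 2c)`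
  have hzero := congrArg (eval ![2, 2 + 2 * c]) hK
  rw [← flowDerivA, eval_flowDerivA_g3A_two c e f hc, eval_mul, eval_g3A_two, mul_zero,
    div_eq_zero_iff] at hzero
  rcases hzero with h | h
  · linarith
  · exact absurd h hc
end

section
/- For system (A), a point (x,y) ∈ ℝ² is a finite singular point (i.e., p(x,y) = 0 and q(x,y) = 0) if and only if (x,y) = (0,0), or (x,y) = (1,0), or (x,y) = ((c − f)/(2c), (f² − c²)/(4c)). In particular, these three listed points form the complete set of finite singular points of system (A), so system (A) has at most three real finite singular points. -/
/-- For system (A) (`ẋ = cx + y - cx²`, `ẏ = ex + (-1 + (e+f)/c)y - ex² + 2xy`,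
`c ≠ 0`), a point `(x, y) ∈ ℝ²` is a finite singular point (both right-hand sides
vanish) if and only if it is `(0,0)`, `(1,0)` or `((c-f)/(2c), (f²-c²)/(4c))`.
In particular these three points form the complete set of finite singularities,
so there are at most three real finite singular points. -/
theorem finite_singularities_sysA (c e f : ℝ) (hc : c ≠ 0) :
    ∀ x y : ℝ,
      (c * x + y - c * x ^ 2 = 0 ∧
        e * x + (-1 + (e + f) / c) * y - e * x ^ 2 + 2 * x * y = 0) ↔
      ((x, y) = ((0 : ℝ), (0 : ℝ)) ∨ (x, y) = ((1 : ℝ), (0 : ℝ)) ∨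
        (x, y) = ((c - f) / (2 * c), (f ^ 2 - c ^ 2) / (4 * c))) := by
  intro x y
  constructor
  · rintro ⟨h1, h2⟩
    have hy : y = c * x ^ 2 - c * x := by linarith
    subst hy
    field_simp at h2
    have key : x * (x - 1) * (2 * c * x + f - c) = 0 := by
      have hc' : c ≠ 0 := hc
      apply mul_left_cancel₀ hc'
      linear_combination c * h2
    rcases mul_eq_zero.mp key with h | h3
    · rcases mul_eq_zero.mp h with h0 | h1'
      · left; subst h0; norm_num
      · right; left
        have hx : x = 1 := by linarith
        subst hx; norm_num
    · right; right
      have hx : x = (c - f) / (2 * c) := by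
        field_simp
        linarith
      subst hx
      have : c * ((c - f) / (2 * c)) ^ 2 - c * ((c - f) / (2 * c)) =
          (f ^ 2 - c ^ 2) / (4 * c) := by
        field_simp
        ring
      rw [this]
  · rintro (h | h | h) <;>
    · simp only [Prod.mk.injEq] at h
      obtain ⟨hx, hy⟩ := h
      subst hx; subst hy
      constructor <;> field_simp <;> ring
end

section
/- For system (B), the point (0,0) is the unique finite singular point in ℝ²; that is, for all (x,y) ∈ ℝ², p(x,y) = 0 and q(x,y) = 0 hold simultaneously if and only if (x,y) = (0,0). (The remaining two finite singularities of the system are complex.) -/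
/-- For system (B) (`ẋ = -2gux + g(1+u²)y + gx²`,
`ẏ = -2(ℓu - 1)x + ℓ(1+u²)y + ℓx² - 2xy`, `g ≠ 0`), the origin is the unique real
finite singular point: both right-hand sides vanish at `(x, y) ∈ ℝ²` if and only if
`(x, y) = (0, 0)`. -/
theorem unique_finite_singularity_sysB (g u ℓ : ℝ) (hg : g ≠ 0) :
    ∀ x y : ℝ,
      (-2 * g * u * x + g * (1 + u ^ 2) * y + g * x ^ 2 = 0 ∧
        -2 * (ℓ * u - 1) * x + ℓ * (1 + u ^ 2) * y + ℓ * x ^ 2 - 2 * x * y = 0) ↔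
      (x, y) = ((0 : ℝ), (0 : ℝ)) := by
  intro x y
  constructor
  · rintro ⟨h1, h2⟩
    have e1 : x ^ 2 - 2 * u * x + (1 + u ^ 2) * y = 0 := by
      have : g * (x ^ 2 - 2 * u * x + (1 + u ^ 2) * y) = g * 0 := by ring_nf; linarith [h1]
      exact mul_left_cancel₀ hg this
    have e2 : 2 * x * (1 - y) = 0 := by linear_combination h2 - ℓ * e1
    rcases mul_eq_zero.mp e2 with hx | hy
    · have hx0 : x = 0 := by linarith [mul_eq_zero.mp (by linarith : (2:ℝ) * x = 0)]
      have hy0 : y = 0 := by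
        have : (1 + u ^ 2) * y = 0 := by
          rw [hx0] at e1; linarith [e1]
        have hpos : (1 + u ^ 2) ≠ 0 := by positivity
        exact (mul_eq_zero.mp this).resolve_left hpos
      simp [hx0, hy0]
    · exfalso
      have hy1 : y = 1 := by linarith
      rw [hy1] at e1
      nlinarith [sq_nonneg (x - u)]
  · intro h
    rw [Prod.mk.injEq] at h
    obtain ⟨hx, hy⟩ := h
    subst hx; subst hy
    norm_num
end

section
/- Let c > 0, f ≥ 0 and e be real numbers, and assume it is not the case that c = 1 and e + f = 0. Define F₁ = −2·(3e + (2 + c)·f) and B₁ = (2/c)·(c²·(c − 1)² − (e + f)²)·(e + c·f). Then F₁ = 0 and B₁ = 0 hold simultaneously if and only if (e, f) = (0, 0) or (e, f) = (−c·(c + 2), 3c). -/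
/-- Let `c > 0`, `f ≥ 0`, `e` be real, and assume it is not the case that `c = 1`
and `e + f = 0` (i.e. `σ ≠ 0`). With `𝓕₁ = -2(3e + (2 + c)f)` and
`𝓑₁ = (2/c)(c²(c - 1)² - (e + f)²)(e + cf)`, one has `𝓕₁ = 0` and `𝓑₁ = 0`
simultaneously if and only if `(e, f) = (0, 0)` or `(e, f) = (-c(c + 2), 3c)`. -/
theorem center_conditions_sysA (c e f : ℝ) (hc : 0 < c) (hf : 0 ≤ f)
    (hσ : ¬(c = 1 ∧ e + f = 0)) :
    (-2 * (3 * e + (2 + c) * f) = 0 ∧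
      (2 / c) * (c ^ 2 * (c - 1) ^ 2 - (e + f) ^ 2) * (e + c * f) = 0) ↔
    ((e, f) = ((0 : ℝ), (0 : ℝ)) ∨ (e, f) = (-c * (c + 2), 3 * c)) := by
  have hc0 : c ≠ 0 := ne_of_gt hc
  constructor
  · rintro ⟨h1, h2⟩
    have hF : 3 * e + (2 + c) * f = 0 := by linarith
    have h2' : (c ^ 2 * (c - 1) ^ 2 - (e + f) ^ 2) * (e + c * f) = 0 := by
      have key : (c / 2) * ((2 / c) * (c ^ 2 * (c - 1) ^ 2 - (e + f) ^ 2) * (e + c * f))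
          = (c ^ 2 * (c - 1) ^ 2 - (e + f) ^ 2) * (e + c * f) := by
        field_simp
      rw [← key, h2, mul_zero]
    rcases mul_eq_zero.mp h2' with hB | hB
    · have hfac : (e + f - c * (c - 1)) * (e + f + c * (c - 1)) = 0 := by
        linear_combination -hB
      rcases mul_eq_zero.mp hfac with h | h
      · have hcc : (c - 1) * (3 * c + f) = 0 := by linear_combination hF - 3 * h
        rcases mul_eq_zero.mp hcc with h' | h'
        · exact absurd ⟨by linarith, by linear_combination h + c * h'⟩ hσ
        · linarith
      · have hcc : (1 - c) * (f - 3 * c) = 0 := by linear_combination 3 * h - hF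
        rcases mul_eq_zero.mp hcc with h' | h'
        · exact absurd ⟨by linarith, by linear_combination h + c * h'⟩ hσ
        · right
          have hf3 : f = 3 * c := by linarith
          have he : e = -c * (c + 2) := by
            linear_combination (1/3) * hF - ((2 + c)/3) * h'
          simp [he, hf3]
    · have hcc : (2 - 2 * c) * f = 0 := by linear_combination hF - 3 * hB
      rcases mul_eq_zero.mp hcc with h' | h'
      · exact absurd ⟨by linarith, by linear_combination hB + (f / 2) * h'⟩ hσ
      · left
        have he : e = 0 := by linear_combination hB - c * h'
        simp [he, h']
  · rintro (h | h) <;> rw [Prod.mk.injEq] at h <;> obtain ⟨he, hf'⟩ := h <;>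
      subst he <;> subst hf' <;> refine ⟨by ring, ?_⟩ <;> field_simp <;> ring
end
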